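/- arXiv:0706.2434 — 2 statements merged into one kernel-verified Lean document; each statement's English description precedes it below -/
import Mathlib

section
/- Assume additionally that g satisfies lim_{‖x‖→∞} g(x)/g(x−y)=1 for every y∈ℝ², and that β_I(R)<∞ for every R>0. Then for all λ_p>0 and c̄>0, lim_{R→∞} P_p(λ_p c̄)/P₁(R,c̄,λ_p) = 0, where P_p(λ_p c̄)=exp(−λ_p c̄ β_I(R)); equivalently, ∫_{ℝ²} (c̄ β(R,y) − 1 + e^{−c̄ β(R,y)}) dy → ∞ as R→∞. -/
open MeasureTheory ProbabilityTheory Filter Real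
open scoped ProbabilityTheory

local notation "E2" => EuclideanSpace ℝ (Fin 2)

open scoped Topology ENNReal

/-!
Put `φ(t) = e^{-t} - 1 + t`. Since `β(R, ·)` is the convolution of `f` with the kernel
`u ↦ g(u)/(g(z)/T + g(u))` and `∫ f = 1`, Fubini gives `∫ β(R, y) dy = β_I(R)`, so the ratio equals
`exp(-λ_p ∫ φ(c̄ β(R, y)) dy)`. For fixed `x, y` the ratio condition on `g` makes the kernel at
`x - y - z` tend to `T/(1+T)`, hence by dominated convergence `β(R, y) → T/(1+T)` for every `y`.
As `0 ≤ φ(c̄ β) ≤ c̄` and `φ(c̄ T/(1+T)) > 0`, the integral of `φ(c̄ β(R, ·))` over a set of finite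
measure tends to a positive multiple of its measure, and the plane has sets of arbitrarily large
finite measure, so `∫ φ(c̄ β(R, y)) dy → ∞`.
-/

noncomputable def negExpRemainder (t : ℝ) : ℝ := exp (-t) - 1 + t

theorem negExpRemainder_nonneg (t : ℝ) : 0 ≤ negExpRemainder t := by
  have := add_one_le_exp (-t)
  unfold negExpRemainder; linarith

theorem negExpRemainder_pos {t : ℝ} (ht : t ≠ 0) : 0 < negExpRemainder t := by
  have := add_one_lt_exp (neg_ne_zero.2 ht)
  unfold negExpRemainder; linarith

theorem negExpRemainder_le_self {t : ℝ} (ht : 0 ≤ t) : negExpRemainder t ≤ t := by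
  have := exp_le_one_iff.2 (neg_nonpos.2 ht)
  unfold negExpRemainder; linarith

theorem continuous_negExpRemainder : Continuous negExpRemainder := by
  unfold negExpRemainder; fun_prop

section Integral

variable {α : Type*} [MeasurableSpace α] {μ : Measure α}

theorem integrable_negExpRemainder_mul {β : α → ℝ} (hβ : Integrable β μ) (hβ_nonneg : 0 ≤ᵐ[μ] β)
    {c : ℝ} (hc : 0 ≤ c) : Integrable (fun y => negExpRemainder (c * β y)) μ := by
  refine (hβ.const_mul c).mono'
    (continuous_negExpRemainder.comp_aestronglyMeasurable (hβ.const_mul c).1) ?_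
  filter_upwards [hβ_nonneg] with y hy
  rw [norm_of_nonneg (negExpRemainder_nonneg _)]
  exact negExpRemainder_le_self (mul_nonneg hc hy)

theorem integral_one_sub_exp_neg_mul {β : α → ℝ} (hβ : Integrable β μ) (hβ_nonneg : 0 ≤ᵐ[μ] β)
    {c : ℝ} (hc : 0 ≤ c) :
    ∫ y, (1 - exp (-(c * β y))) ∂μ = c * ∫ y, β y ∂μ - ∫ y, negExpRemainder (c * β y) ∂μ := by
  have h : (fun y => 1 - exp (-(c * β y))) = fun y => c * β y - negExpRemainder (c * β y) := by
    ext y; unfold negExpRemainder; ring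
  rw [h, integral_sub (hβ.const_mul c) (integrable_negExpRemainder_mul hβ hβ_nonneg hc),
    integral_const_mul]

theorem tendsto_integral_atTop_of_tendsto_pos [SigmaFinite μ] (hμ : μ Set.univ = ∞)
    {ι : Type*} {l : Filter ι} [l.IsCountablyGenerated] {F : ι → α → ℝ} {c C : ℝ} (hc : 0 < c)
    (hF_int : ∀ᶠ i in l, Integrable (F i) μ) (hF_nonneg : ∀ᶠ i in l, 0 ≤ᵐ[μ] F i)
    (hF_le : ∀ᶠ i in l, ∀ᵐ y ∂μ, F i y ≤ C) (hF_lim : ∀ᵐ y ∂μ, Tendsto (F · y) l (𝓝 c)) :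
    Tendsto (fun i => ∫ y, F i y ∂μ) l atTop := by
  refine tendsto_atTop.2 fun M => ?_
  obtain ⟨s, -, -, hs, hs_fin⟩ := μ.exists_subset_measure_lt_top MeasurableSet.univ
    (hμ ▸ ENNReal.ofReal_lt_top : ENNReal.ofReal (|M| / c) < μ Set.univ)
  have hM : M < c * μ.real s := by
    rw [ENNReal.ofReal_lt_iff_lt_toReal (by positivity) hs_fin.ne, div_lt_iff₀' hc] at hs
    exact (le_abs_self M).trans_lt hs
  have hs_lim : Tendsto (fun i => ∫ y in s, F i y ∂μ) l (𝓝 (c * μ.real s)) := by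
    have := tendsto_integral_filter_of_dominated_convergence (μ := μ.restrict s) (fun _ => C)
      (hF_int.mono fun i hi => hi.1.restrict)
      ((hF_nonneg.and hF_le).mono fun i hi => ae_restrict_of_ae <| by
        filter_upwards [hi.1, hi.2] with y hy₀ hyC
        rwa [norm_of_nonneg hy₀])
      (integrableOn_const hs_fin.ne) (ae_restrict_of_ae hF_lim)
    rwa [setIntegral_const, smul_eq_mul, mul_comm] at this
  filter_upwards [hs_lim.eventually (eventually_gt_nhds hM), hF_int, hF_nonneg] with i hi hint hnn
  exact hi.le.trans (setIntegral_le_integral hint hnn)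

theorem negExpRemainder_mul_le {c t : ℝ} (hc : 0 ≤ c) (ht : t ∈ Set.Icc 0 1) :
    negExpRemainder (c * t) ≤ c :=
  (negExpRemainder_le_self (mul_nonneg hc ht.1)).trans (mul_le_of_le_one_right hc ht.2)

theorem tendsto_integral_negExpRemainder_mul_atTop [SigmaFinite μ] (hμ : μ Set.univ = ∞)
    {ι : Type*} {l : Filter ι} [l.IsCountablyGenerated] {β : ι → α → ℝ} {c p : ℝ} (hc : 0 < c)
    (hp : p ≠ 0) (hβ_int : ∀ᶠ i in l, Integrable (β i) μ)
    (hβ_mem : ∀ᶠ i in l, ∀ᵐ y ∂μ, β i y ∈ Set.Icc 0 1)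
    (hβ_lim : ∀ᵐ y ∂μ, Tendsto (β · y) l (𝓝 p)) :
    Tendsto (fun i => ∫ y, negExpRemainder (c * β i y) ∂μ) l atTop :=
  tendsto_integral_atTop_of_tendsto_pos hμ (negExpRemainder_pos (mul_ne_zero hc.ne' hp))
    ((hβ_int.and hβ_mem).mono fun _ hi => integrable_negExpRemainder_mul hi.1
      (hi.2.mono fun _ hy => hy.1) hc.le)
    (.of_forall fun _ => ae_of_all _ fun _ => negExpRemainder_nonneg _)
    (hβ_mem.mono fun _ hi => hi.mono fun _ hy => negExpRemainder_mul_le hc.le hy)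
    (hβ_lim.mono fun _ hy => (continuous_negExpRemainder.tendsto _).comp (hy.const_mul c))

end Integral

section Averaging

variable {E : Type*} [MeasurableSpace E] {μ : Measure E} {k f : E → ℝ}

theorem ae_comp_sub_sub [AddCommGroup E] [MeasurableAdd E] [μ.IsAddRightInvariant] {p : E → Prop}
    (h : ∀ᵐ u ∂μ, p u) (y w : E) : ∀ᵐ x ∂μ, p (x - y - w) := by
  filter_upwards [(measurePreserving_sub_right μ (y + w)).quasiMeasurePreserving.ae h] with x hx
  rwa [sub_sub]

theorem integral_comp_sub_sub_mul_eq_convolution [AddCommGroup E] (w : E) :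
    (fun y => ∫ x, k (x - y - w) * f x ∂μ)
      = convolution f (fun u => k (-u - w)) (ContinuousLinearMap.mul ℝ ℝ) μ := by
  ext y
  simp only [convolution, ContinuousLinearMap.mul_apply', neg_sub, mul_comm]

theorem integrable_integral_comp_sub_sub_mul [AddCommGroup E] [MeasurableAdd₂ E] [MeasurableNeg E]
    [SFinite μ] [μ.IsAddRightInvariant] [μ.IsNegInvariant] (hk : Integrable k μ)
    (hf : Integrable f μ) (w : E) : Integrable (fun y => ∫ x, k (x - y - w) * f x ∂μ) μ := by
  rw [integral_comp_sub_sub_mul_eq_convolution]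
  exact hf.integrable_convolution _ (hk.comp_sub_right w).comp_neg

theorem integral_integral_comp_sub_sub_mul [AddCommGroup E] [MeasurableAdd₂ E] [MeasurableNeg E]
    [SFinite μ] [μ.IsAddRightInvariant] [μ.IsNegInvariant] (hk : Integrable k μ)
    (hf : Integrable f μ) (w : E) :
    ∫ y, ∫ x, k (x - y - w) * f x ∂μ ∂μ = (∫ u, k u ∂μ) * ∫ x, f x ∂μ := by
  rw [integral_comp_sub_sub_mul_eq_convolution,
    integral_convolution _ hf (hk.comp_sub_right w).comp_neg,
    integral_neg_eq_self (fun u => k (u - w)), integral_sub_right_eq_self,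
    ContinuousLinearMap.mul_apply', mul_comm]

theorem integral_comp_sub_sub_mul_mem_Icc [AddCommGroup E] [MeasurableAdd E] [μ.IsAddRightInvariant]
    (hk : ∀ᵐ u ∂μ, k u ∈ Set.Icc 0 1) (hf_nonneg : 0 ≤ f) (hf : Integrable f μ) (y w : E) :
    ∫ x, k (x - y - w) * f x ∂μ ∈ Set.Icc 0 (∫ x, f x ∂μ) := by
  have hk' := ae_comp_sub_sub hk y w
  refine ⟨integral_nonneg_of_ae ?_, integral_mono_of_nonneg ?_ hf ?_⟩ <;>
    filter_upwards [hk'] with x hx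
  · exact mul_nonneg hx.1 (hf_nonneg x)
  · exact mul_nonneg hx.1 (hf_nonneg x)
  · exact mul_le_of_le_one_left (hf_nonneg x) hx.2

theorem tendsto_integral_comp_sub_sub_mul [AddCommGroup E] [MeasurableAdd E] [μ.IsAddRightInvariant]
    {ι : Type*} {l : Filter ι} [l.IsCountablyGenerated] {K : ι → E → ℝ} {w : ι → E} {p : ℝ}
    (hK_meas : ∀ᶠ i in l, AEStronglyMeasurable (K i) μ)
    (hK_mem : ∀ᶠ i in l, ∀ᵐ u ∂μ, K i u ∈ Set.Icc 0 1) (hf : Integrable f μ) (y : E)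
    (hK_lim : ∀ x, Tendsto (fun i => K i (x - y - w i)) l (𝓝 p)) :
    Tendsto (fun i => ∫ x, K i (x - y - w i) * f x ∂μ) l (𝓝 (p * ∫ x, f x ∂μ)) := by
  rw [← integral_const_mul]
  refine tendsto_integral_filter_of_dominated_convergence (fun x => ‖f x‖) ?_ ?_ hf.norm
    (ae_of_all _ fun x => (hK_lim x).mul_const (f x))
  · filter_upwards [hK_meas] with i hi
    simp_rw [sub_sub]
    exact (hi.comp_quasiMeasurePreserving
      (measurePreserving_sub_right μ _).quasiMeasurePreserving).mul hf.1
  · filter_upwards [hK_mem] with i hi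
    filter_upwards [ae_comp_sub_sub hi y (w i)] with x hx
    rw [norm_mul, Real.norm_of_nonneg hx.1]
    exact mul_le_of_le_one_left (norm_nonneg _) hx.2

end Averaging

section PathLoss

variable {E : Type*} [NormedAddCommGroup E] {g : E → ℝ}

theorem apply_neg_eq_of_antitone_norm
    (hg_mono : ∀ x y : E, x ≠ 0 → y ≠ 0 → ‖x‖ ≤ ‖y‖ → g y ≤ g x) (u : E) : g (-u) = g u := by
  rcases eq_or_ne u 0 with rfl | hu
  · rw [neg_zero]
  · have hu' : -u ≠ 0 := neg_ne_zero.2 hu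
    exact le_antisymm (hg_mono u (-u) hu hu' (norm_neg u).ge)
      (hg_mono (-u) u hu' hu (norm_neg u).le)

theorem ae_div_add_mem_Icc [MeasurableSpace E] {μ : Measure E} [NullSingletonClass μ]
    (hg_pos : ∀ u : E, u ≠ 0 → 0 < g u) {a : ℝ} (ha : 0 ≤ a) :
    ∀ᵐ u ∂μ, g u / (a + g u) ∈ Set.Icc 0 1 := by
  filter_upwards [μ.ae_ne 0] with u hu
  have := hg_pos u hu
  exact ⟨by positivity, div_le_one_of_le₀ (by linarith) (by positivity)⟩

theorem tendsto_apply_sub_div_add {T : ℝ} (hT : 0 < T) (hg_pos : ∀ u : E, u ≠ 0 → 0 < g u)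
    (hg_mono : ∀ x y : E, x ≠ 0 → y ≠ 0 → ‖x‖ ≤ ‖y‖ → g y ≤ g x)
    (hg_ratio : ∀ y : E, Tendsto (fun x => g x / g (x - y)) (comap norm atTop) (𝓝 1))
    {ι : Type*} {l : Filter ι} {z : ι → E} (hz : Tendsto z l (comap norm atTop)) (d : E) :
    Tendsto (fun i => g (d - z i) / (g (z i) / T + g (d - z i))) l (𝓝 (T / (1 + T))) := by
  have hlim : Tendsto (fun i => (g (z i) / g (z i - d) / T + 1)⁻¹) l (𝓝 (1 / T + 1)⁻¹) :=
    ((((hg_ratio d).comp hz).div_const T).add_const 1).inv₀ (by positivity)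
  rw [show (1 / T + 1)⁻¹ = T / (1 + T) by field_simp] at hlim
  refine hlim.congr' ?_
  filter_upwards [(tendsto_comap_iff.1 hz).eventually_gt_atTop ‖d‖] with i hi
  have hne : z i - d ≠ 0 := fun h => hi.ne (by simp [sub_eq_zero.1 h])
  have := hg_pos _ hne
  rw [← neg_sub (z i) d, apply_neg_eq_of_antitone_norm hg_mono]
  field_simp

end PathLoss

theorem stmt_5_general
    (g f : E2 → ℝ) (T lamp cbar : ℝ)
    (hT : 0 < T) (hlamp : 0 < lamp) (hcbar : 0 < cbar)
    (hg_pos : ∀ x : E2, x ≠ 0 → 0 < g x)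
    (hg_mono : ∀ x y : E2, x ≠ 0 → y ≠ 0 → ‖x‖ ≤ ‖y‖ → g y ≤ g x)
    (hg_ratio : ∀ y : E2,
      Tendsto (fun x : E2 => g x / g (x - y)) (Filter.comap norm atTop) (nhds 1))
    (hf_nonneg : ∀ x, 0 ≤ f x)
    (hf_prob : ∫ x, f x = 1)
    (z : ℝ → E2) (hz : ∀ R, z R = EuclideanSpace.single (0 : Fin 2) R)
    (β : ℝ → E2 → ℝ)
    (hβ : ∀ R y, β R y = ∫ x, g (x - y - z R) / (g (z R) / T + g (x - y - z R)) * f x)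
    (βI : ℝ → ℝ) (hβI : ∀ R, βI R = ∫ u, g u / (g (z R) / T + g u))
    (hβI_fin : ∀ R : ℝ, 0 < R → Integrable fun u : E2 => g u / (g (z R) / T + g u))
    (P1 : ℝ → ℝ)
    (hP1 : ∀ R, P1 R = Real.exp (-(lamp * ∫ y, (1 - Real.exp (-(cbar * β R y)))))) :
    Tendsto (fun R => Real.exp (-(lamp * cbar * βI R)) / P1 R) atTop (nhds 0) := by
  have hf : Integrable f := .of_integral_ne_zero (by rw [hf_prob]; exact one_ne_zero)
  have hz_lim : Tendsto z atTop (comap norm atTop) :=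
    tendsto_comap_iff.2 <| by simpa [Function.comp_def, hz] using tendsto_abs_atTop_atTop
  have ha : ∀ R, 0 < R → 0 ≤ g (z R) / T := fun R hR =>
    div_nonneg (hg_pos _ (by simp [hz, hR.ne'])).le hT.le
  have hβ_mem : ∀ R, 0 < R → ∀ y, β R y ∈ Set.Icc 0 1 := fun R hR y => by
    simpa [hβ, hf_prob] using integral_comp_sub_sub_mul_mem_Icc
      (ae_div_add_mem_Icc hg_pos (ha R hR)) hf_nonneg hf y (z R)
  have hβ_int : ∀ R, 0 < R → Integrable (β R) ∧ ∫ y, β R y = βI R := fun R hR => by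
    rw [show β R = _ from funext (hβ R)]
    exact ⟨integrable_integral_comp_sub_sub_mul (hβI_fin R hR) hf (z R), by
      rw [integral_integral_comp_sub_sub_mul (hβI_fin R hR) hf, hf_prob, mul_one, hβI]⟩
  have hβ_lim : ∀ y, Tendsto (β · y) atTop (𝓝 (T / (1 + T))) := fun y => by
    simpa [hβ, hf_prob] using tendsto_integral_comp_sub_sub_mul
      (K := fun R u => g u / (g (z R) / T + g u)) (w := z)
      ((eventually_gt_atTop 0).mono fun R hR => (hβI_fin R hR).1)
      ((eventually_gt_atTop 0).mono fun R hR => ae_div_add_mem_Icc hg_pos (ha R hR)) hf y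
      fun x => tendsto_apply_sub_div_add hT hg_pos hg_mono hg_ratio hz_lim (x - y)
  have hratio : ∀ R, 0 < R → exp (-(lamp * cbar * βI R)) / P1 R
      = exp (-(lamp * ∫ y, negExpRemainder (cbar * β R y))) := fun R hR => by
    rw [hP1, ← exp_sub, integral_one_sub_exp_neg_mul (hβ_int R hR).1
      (ae_of_all _ fun y => (hβ_mem R hR y).1) hcbar.le, (hβ_int R hR).2]
    ring_nf
  have hgrowth := tendsto_integral_negExpRemainder_mul_atTop
    (measure_univ_of_isAddLeftInvariant volume) hcbar (by positivity : T / (1 + T) ≠ 0)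
    ((eventually_gt_atTop 0).mono fun R hR => (hβ_int R hR).1)
    ((eventually_gt_atTop 0).mono fun R hR => ae_of_all _ (hβ_mem R hR)) (ae_of_all _ hβ_lim)
  refine (tendsto_exp_atBot.comp (tendsto_neg_atTop_atBot.comp
    (hgrowth.const_mul_atTop hlamp))).congr' ?_
  filter_upwards [eventually_gt_atTop 0] with R hR
  exact (hratio R hR).symm

/-- For large transmitter–receiver distance `R`, the success probability of the
Poisson network is negligible compared with the factor `P₁` of the clustered
network: `P_p(λ_p c̄)/P₁(R,c̄,λ_p) → 0` as `R → ∞`. -/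
theorem stmt_5
    (g f : E2 → ℝ) (T lamp cbar : ℝ)
    (hT : 0 < T) (hlamp : 0 < lamp) (hcbar : 0 < cbar)
    (hg_pos : ∀ x : E2, x ≠ 0 → 0 < g x)
    (hg_cont : ContinuousOn g {(0 : E2)}ᶜ)
    (hg_mono : ∀ x y : E2, x ≠ 0 → y ≠ 0 → ‖x‖ ≤ ‖y‖ → g y ≤ g x)
    (hg_int : ∀ ε : ℝ, 0 < ε → IntegrableOn g (Metric.ball (0 : E2) ε)ᶜ)
    (hg_ratio : ∀ y : E2,
      Tendsto (fun x : E2 => g x / g (x - y)) (Filter.comap norm atTop) (nhds 1))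
    (hf_meas : Measurable f) (hf_nonneg : ∀ x, 0 ≤ f x)
    (hf_prob : ∫ x, f x = 1)
    (hf_iso : ∀ x y : E2, ‖x‖ = ‖y‖ → f x = f y)
    (z : ℝ → E2) (hz : ∀ R, z R = EuclideanSpace.single (0 : Fin 2) R)
    (β : ℝ → E2 → ℝ)
    (hβ : ∀ R y, β R y = ∫ x, g (x - y - z R) / (g (z R) / T + g (x - y - z R)) * f x)
    (βI : ℝ → ℝ) (hβI : ∀ R, βI R = ∫ u, g u / (g (z R) / T + g u))
    (hβI_fin : ∀ R : ℝ, 0 < R → Integrable fun u : E2 => g u / (g (z R) / T + g u))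
    (P1 : ℝ → ℝ)
    (hP1 : ∀ R, P1 R = Real.exp (-(lamp * ∫ y, (1 - Real.exp (-(cbar * β R y)))))) :
    Tendsto (fun R => Real.exp (-(lamp * cbar * βI R)) / P1 R) atTop (nhds 0) :=
  stmt_5_general g f T lamp cbar hT hlamp hcbar hg_pos hg_mono hg_ratio hf_nonneg hf_prob z hz β hβ
    βI hβI hβI_fin P1 hP1
end

section
/- Assume 0<β_I<∞, β̂ := sup_{y∈ℝ²} β(y) > 0, k := ∫_{ℝ²} β(y) f(y) dy > 0, and set ρ(T)=k/β̂. Then for every ε with 0<ε<1−e^{−ρ(T)}, the transmission capacity of the Poisson clustered process is upper bounded by that of the Poisson point process: C(ε,T) ≤ C_p(ε,T) = ((1−ε)/β_I)·ln(1/(1−ε)). -/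
open MeasureTheory ProbabilityTheory Filter Real
open scoped ProbabilityTheory ENNReal

local notation "E2" => EuclideanSpace ℝ (Fin 2)

/-! Write `s = c β̂`. Since `0 ≤ c β ≤ s`, the bound `t e^{-t} ≤ 1 - e^{-t}` gives
`∫ (1 - e^{-cβ}) ≥ e^{-s} c ∫ β`, and convexity of `t ↦ e^{-t}` on `[0, s]` gives
`P₂ ≤ 1 - ρ (1 - e^{-s})`; by Fubini `∫ β = β_I`. Taking logarithms in `1 - ε ≤ P₁ P₂` and using
`log P₂ ≤ P₂ - 1` yields `e^{-s} λ c β_I ≤ L - ρ (1 - e^{-s})` with `L = ln (1/(1-ε)) < ρ`,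
and multiplying by `e^s` shows `λ c β_I ≤ L + (L - ρ)(e^s - 1) ≤ L`. -/

namespace Real

theorem exp_neg_mul_le_one_sub_exp_neg {s t : ℝ} (ht : 0 ≤ t) (hts : t ≤ s) :
    exp (-s) * t ≤ 1 - exp (-t) := by
  have hexp : exp (-t) * (t + 1) ≤ 1 := by
    simpa [← exp_add] using mul_le_mul_of_nonneg_left (add_one_le_exp t) (exp_pos (-t)).le
  nlinarith [mul_le_mul_of_nonneg_right (exp_le_exp.2 (neg_le_neg hts)) ht]

theorem exp_neg_mul_le_chord {θ s : ℝ} (hθ₀ : 0 ≤ θ) (hθ₁ : θ ≤ 1) :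
    exp (-(θ * s)) ≤ 1 - θ * (1 - exp (-s)) := by
  have := convexOn_exp.2 (Set.mem_univ 0) (Set.mem_univ (-s)) (sub_nonneg.2 hθ₁) hθ₀
    (sub_add_cancel 1 θ)
  simp only [smul_eq_mul, mul_zero, zero_add, exp_zero, mul_one, mul_neg] at this
  linarith

theorem le_sub_one_add_log_of_le_exp_neg_mul {a x q : ℝ} (ha : 0 < a)
    (h : a ≤ exp (-x) * q) : x ≤ q - 1 + log (1 / a) := by
  have hq : 0 < q := pos_of_mul_pos_right (ha.trans_le h) (exp_pos _).le
  have hlog := log_le_log ha h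
  rw [log_mul (exp_pos _).ne' hq.ne', log_exp] at hlog
  rw [one_div, log_inv]
  linarith [log_le_sub_one_of_pos hq]

theorem le_of_exp_neg_mul_le_sub {x s L ρ : ℝ} (hs : 0 ≤ s) (hLρ : L ≤ ρ)
    (h : exp (-s) * x ≤ L - ρ * (1 - exp (-s))) : x ≤ L := by
  have hes : exp (-s) * exp s = 1 := by rw [← exp_add, neg_add_cancel, exp_zero]
  have h' := mul_le_mul_of_nonneg_right h (exp_pos s).le
  calc x = exp (-s) * x * exp s := by linear_combination (-x) * hes
    _ ≤ (L - ρ * (1 - exp (-s))) * exp s := h'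
    _ = L + (L - ρ) * (exp s - 1) := by linear_combination ρ * hes
    _ ≤ L := by nlinarith [one_le_exp hs]

theorem log_one_div_lt_of_exp_neg_lt {a ρ : ℝ} (h : exp (-ρ) < a) : log (1 / a) < ρ := by
  have := log_lt_log (exp_pos _) h
  rw [log_exp] at this
  rw [one_div, log_inv]
  linarith

end Real

section SuccessProbability

variable {α : Type*} [MeasurableSpace α] {μ : Measure α} {β f : α → ℝ} {b c : ℝ}

/-- The product `P₁ P₂` of the paper, for parent intensity `lam` and mean cluster size `c`. -/
noncomputable def clusterSuccessProb (μ : Measure α) (β f : α → ℝ) (lam c : ℝ) : ℝ :=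
  exp (-(lam * ∫ y, 1 - exp (-(c * β y)) ∂μ)) * ∫ y, exp (-(c * β y)) * f y ∂μ

theorem exp_neg_mul_mul_integral_le_integral_one_sub_exp_neg (hβ : Integrable β μ)
    (hβ₀ : ∀ y, 0 ≤ β y) (hβb : ∀ y, β y ≤ b) (hc : 0 ≤ c) :
    exp (-(c * b)) * (c * ∫ y, β y ∂μ) ≤ ∫ y, 1 - exp (-(c * β y)) ∂μ := by
  have hcβ : Integrable (fun y => c * β y) μ := hβ.const_mul c
  have hint : Integrable (fun y => 1 - exp (-(c * β y))) μ := by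
    refine hcβ.mono' (by fun_prop) (Eventually.of_forall fun y => ?_)
    have hcβ₀ : 0 ≤ c * β y := mul_nonneg hc (hβ₀ y)
    rw [Real.norm_of_nonneg (sub_nonneg.2 (exp_le_one_iff.2 (neg_nonpos.2 hcβ₀)))]
    linarith [add_one_le_exp (-(c * β y))]
  rw [← integral_const_mul, ← integral_const_mul]
  exact integral_mono (hcβ.const_mul _) hint fun y =>
    exp_neg_mul_le_one_sub_exp_neg (mul_nonneg hc (hβ₀ y))
      (mul_le_mul_of_nonneg_left (hβb y) hc)

theorem integral_exp_neg_mul_mul_le (hβ : AEStronglyMeasurable β μ) (hβ₀ : ∀ y, 0 ≤ β y)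
    (hβb : ∀ y, β y ≤ b) (hb : 0 < b) (hc : 0 ≤ c) (hf : Integrable f μ) (hf₀ : ∀ y, 0 ≤ f y)
    (hf₁ : ∫ y, f y ∂μ = 1) :
    ∫ y, exp (-(c * β y)) * f y ∂μ ≤ 1 - (∫ y, β y * f y ∂μ) / b * (1 - exp (-(c * b))) := by
  have hβf : Integrable (fun y => β y * f y) μ :=
    hf.bdd_mul hβ (Eventually.of_forall fun y => by
      rw [Real.norm_of_nonneg (hβ₀ y)]; exact hβb y)
  have hexpf : Integrable (fun y => exp (-(c * β y)) * f y) μ :=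
    hf.bdd_mul (by fun_prop) (Eventually.of_forall fun y => by
      rw [Real.norm_of_nonneg (exp_pos _).le]
      exact exp_le_one_iff.2 (neg_nonpos.2 (mul_nonneg hc (hβ₀ y))))
  have hchord : ∀ y, exp (-(c * β y)) ≤ 1 - β y / b * (1 - exp (-(c * b))) := fun y => by
    have := exp_neg_mul_le_chord (s := c * b) (div_nonneg (hβ₀ y) hb.le)
      ((div_le_one hb).2 (hβb y))
    rwa [div_mul_comm, mul_div_cancel_right₀ c hb.ne'] at this
  calc ∫ y, exp (-(c * β y)) * f y ∂μ
      ≤ ∫ y, f y - (1 - exp (-(c * b))) / b * (β y * f y) ∂μ :=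
        integral_mono hexpf (hf.sub (hβf.const_mul _)) fun y =>
          (mul_le_mul_of_nonneg_right (hchord y) (hf₀ y)).trans_eq (by ring)
    _ = 1 - (∫ y, β y * f y ∂μ) / b * (1 - exp (-(c * b))) := by
        rw [integral_sub hf (hβf.const_mul _), integral_const_mul, hf₁]
        ring

theorem mul_mul_integral_le_log_of_le_clusterSuccessProb {lam a : ℝ} (hβ : Integrable β μ)
    (hβ₀ : ∀ y, 0 ≤ β y) (hβb : ∀ y, β y ≤ b) (hb : 0 < b) (hf : Integrable f μ)
    (hf₀ : ∀ y, 0 ≤ f y) (hf₁ : ∫ y, f y ∂μ = 1) (hlam : 0 ≤ lam) (hc : 0 ≤ c) (ha : 0 < a)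
    (hρ : log (1 / a) ≤ (∫ y, β y * f y ∂μ) / b) (h : a ≤ clusterSuccessProb μ β f lam c) :
    lam * c * ∫ y, β y ∂μ ≤ log (1 / a) := by
  have hI := exp_neg_mul_mul_integral_le_integral_one_sub_exp_neg hβ hβ₀ hβb hc
  have hP₂ := integral_exp_neg_mul_mul_le hβ.aestronglyMeasurable hβ₀ hβb hb hc hf hf₀ hf₁
  have hP := le_sub_one_add_log_of_le_exp_neg_mul ha h
  refine le_of_exp_neg_mul_le_sub (mul_nonneg hc hb.le) hρ ?_
  calc exp (-(c * b)) * (lam * c * ∫ y, β y ∂μ)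
      = lam * (exp (-(c * b)) * (c * ∫ y, β y ∂μ)) := by ring
    _ ≤ lam * ∫ y, 1 - exp (-(c * β y)) ∂μ := mul_le_mul_of_nonneg_left hI hlam
    _ ≤ _ := by linarith

/-- The capacity `C(ε, T)` of the paper, with `a = 1 - ε`. -/
noncomputable def clusterTransmissionCapacity (μ : Measure α) (β f : α → ℝ) (a : ℝ) : ℝ≥0∞ :=
  ENNReal.ofReal a *
    ⨆ (p : ℝ × ℝ) (_ : 0 < p.1 ∧ 0 < p.2 ∧ a ≤ clusterSuccessProb μ β f p.1 p.2),
      ENNReal.ofReal (p.1 * p.2)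

theorem clusterTransmissionCapacity_le {a : ℝ} (hβ : Integrable β μ) (hβ₀ : ∀ y, 0 ≤ β y)
    (hβb : ∀ y, β y ≤ b) (hb : 0 < b) (hβ_pos : 0 < ∫ y, β y ∂μ) (hf : Integrable f μ)
    (hf₀ : ∀ y, 0 ≤ f y) (hf₁ : ∫ y, f y ∂μ = 1) (ha : 0 < a)
    (hρ : log (1 / a) ≤ (∫ y, β y * f y ∂μ) / b) :
    clusterTransmissionCapacity μ β f a ≤
      ENNReal.ofReal (a / (∫ y, β y ∂μ) * log (1 / a)) := by
  rw [clusterTransmissionCapacity, div_mul_eq_mul_div, mul_div_assoc, ENNReal.ofReal_mul ha.le]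
  gcongr
  refine iSup₂_le fun p hp => ENNReal.ofReal_le_ofReal ?_
  rw [le_div_iff₀ hβ_pos]
  exact mul_mul_integral_le_log_of_le_clusterSuccessProb hβ hβ₀ hβb hb hf hf₀ hf₁ hp.1.le
    hp.2.1.le ha hρ hp.2.2

end SuccessProbability

section TranslateIntegral

variable {G : Type*} [AddGroup G] [MeasurableSpace G] {μ : Measure G} {h f : G → ℝ}

theorem integral_sub_mul_eq_convolution :
    (fun y => ∫ x, h (x - y) * f x ∂μ) =
      convolution f (fun u => h (-u)) (ContinuousLinearMap.mul ℝ ℝ) μ := by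
  funext y
  simp only [convolution_def, ContinuousLinearMap.mul_apply', neg_sub, mul_comm]

variable [μ.IsAddRightInvariant]

theorem integral_sub_mul_mem_Icc [MeasurableAdd G] (hh : AEStronglyMeasurable h μ)
    (hh₀₁ : ∀ᵐ u ∂μ, h u ∈ Set.Icc 0 1) (hf : Integrable f μ) (hf₀ : ∀ x, 0 ≤ f x) (y : G) :
    ∫ x, h (x - y) * f x ∂μ ∈ Set.Icc 0 (∫ x, f x ∂μ) := by
  have hqmp := (measurePreserving_sub_right μ y).quasiMeasurePreserving
  have hbound : ∀ᵐ x ∂μ, h (x - y) ∈ Set.Icc 0 1 := hqmp.ae hh₀₁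
  have hint : Integrable (fun x => h (x - y) * f x) μ :=
    hf.bdd_mul (hh.comp_quasiMeasurePreserving hqmp) (hbound.mono fun x hx => by
      rw [Real.norm_of_nonneg hx.1]; exact hx.2)
  exact ⟨integral_nonneg_of_ae (hbound.mono fun x hx => mul_nonneg hx.1 (hf₀ x)),
    integral_mono_ae hint hf (hbound.mono fun x hx => mul_le_of_le_one_left (hf₀ x) hx.2)⟩

variable [MeasurableAdd₂ G] [MeasurableNeg G] [SFinite μ] [μ.IsNegInvariant]

theorem MeasureTheory.Integrable.integral_sub_mul (hh : Integrable h μ) (hf : Integrable f μ) :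
    Integrable (fun y => ∫ x, h (x - y) * f x ∂μ) μ := by
  rw [integral_sub_mul_eq_convolution]
  exact hf.integrable_convolution _ hh.comp_neg

theorem integral_integral_sub_mul (hh : Integrable h μ) (hf : Integrable f μ) :
    ∫ y, ∫ x, h (x - y) * f x ∂μ ∂μ = (∫ u, h u ∂μ) * ∫ x, f x ∂μ := by
  rw [integral_sub_mul_eq_convolution, integral_convolution _ hf hh.comp_neg,
    integral_neg_eq_self, ContinuousLinearMap.mul_apply', mul_comm]

end TranslateIntegral

theorem stmt_9_general
    (g f : E2 → ℝ) (T R ε : ℝ)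
    (hT : 0 < T) (hR : 0 < R)
    (hg_pos : ∀ x : E2, x ≠ 0 → 0 < g x)
    (hf_nonneg : ∀ x, 0 ≤ f x)
    (hf_prob : ∫ x, f x = 1)
    (z : E2) (hz : z = EuclideanSpace.single (0 : Fin 2) R)
    (β : E2 → ℝ)
    (hβ : ∀ y, β y = ∫ x, g (x - y - z) / (g z / T + g (x - y - z)) * f x)
    (βI : ℝ) (hβI : βI = ∫ u, g u / (g z / T + g u))
    (hβI_fin : Integrable fun u : E2 => g u / (g z / T + g u))
    (hβI_pos : 0 < βI)
    (βhat : ℝ) (hβhat : βhat = ⨆ y : E2, β y) (hβhat_pos : 0 < βhat)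
    (k : ℝ) (hk : k = ∫ y, β y * f y)
    (hε_small : ε < 1 - Real.exp (-(k / βhat)))
    (P1 : ℝ → ℝ → ℝ) (P2 : ℝ → ℝ)
    (hP1 : ∀ cbar lamp, P1 cbar lamp =
      Real.exp (-(lamp * ∫ y, (1 - Real.exp (-(cbar * β y))))))
    (hP2 : ∀ cbar, P2 cbar = ∫ y, Real.exp (-(cbar * β y)) * f y)
    (C : ℝ≥0∞)
    (hC : C = ENNReal.ofReal (1 - ε) *
      ⨆ (p : ℝ × ℝ) (_ : 0 < p.1 ∧ 0 < p.2 ∧ 1 - ε ≤ P1 p.2 p.1 * P2 p.2),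
        ENNReal.ofReal (p.1 * p.2)) :
    C ≤ ENNReal.ofReal ((1 - ε) / βI * Real.log (1 / (1 - ε))) := by
  have hε₁ : 0 < 1 - ε := (exp_pos _).trans (by linarith)
  have hgz : 0 < g z := hg_pos z (by simpa [hz] using hR.ne')
  set φ : E2 → ℝ := fun u => g (u - z) / (g z / T + g (u - z))
  have hφ_int : Integrable φ := hβI_fin.comp_sub_right z
  have hφ_mem : ∀ᵐ u : E2, φ u ∈ Set.Icc 0 1 := by
    filter_upwards [volume.ae_ne z] with u hu
    have hgu : 0 < g (u - z) := hg_pos _ (sub_ne_zero.2 hu)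
    have hden : 0 < g z / T + g (u - z) := by positivity
    exact ⟨by positivity, (div_le_one hden).2 (by linarith [div_pos hgz hT])⟩
  have hβφ : β = fun y => ∫ x, φ (x - y) * f x := funext hβ
  have hf_int : Integrable f := .of_integral_ne_zero (by rw [hf_prob]; exact one_ne_zero)
  have hβ_int : Integrable β := hβφ ▸ hφ_int.integral_sub_mul hf_int
  have hβ_integral : ∫ y, β y = βI := by
    rw [hβφ, integral_integral_sub_mul hφ_int hf_int, hf_prob, mul_one, hβI,
      integral_sub_right_eq_self (fun u => g u / (g z / T + g u))]
  have hβ_mem : ∀ y, β y ∈ Set.Icc 0 1 := by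
    rw [hβφ, ← hf_prob]
    exact integral_sub_mul_mem_Icc hφ_int.aestronglyMeasurable hφ_mem hf_int hf_nonneg
  have hβ_le : ∀ y, β y ≤ βhat :=
    fun y => hβhat ▸ le_ciSup ⟨1, Set.forall_mem_range.2 fun y => (hβ_mem y).2⟩ y
  have hC' : C = clusterTransmissionCapacity volume β f (1 - ε) := by
    simp only [hC, hP1, hP2, clusterTransmissionCapacity, clusterSuccessProb]
  rw [hC', ← hβ_integral]
  exact clusterTransmissionCapacity_le hβ_int (fun y => (hβ_mem y).1) hβ_le hβhat_pos
    (hβ_integral ▸ hβI_pos) hf_int hf_nonneg hf_prob hε₁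
    (hk ▸ (log_one_div_lt_of_exp_neg_lt (by linarith)).le)

/-- For outage constraints `ε < 1 - e^{-ρ(T)}` with `ρ(T) = k/β̂`, the transmission
capacity of the Poisson clustered network is upper bounded by that of the Poisson
network: `C(ε,T) ≤ C_p(ε,T) = ((1-ε)/β_I)·ln(1/(1-ε))`. -/
theorem stmt_9
    (g f : E2 → ℝ) (T R ε : ℝ)
    (hT : 0 < T) (hR : 0 < R)
    (hg_pos : ∀ x : E2, x ≠ 0 → 0 < g x)
    (hg_cont : ContinuousOn g {(0 : E2)}ᶜ)
    (hg_mono : ∀ x y : E2, x ≠ 0 → y ≠ 0 → ‖x‖ ≤ ‖y‖ → g y ≤ g x)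
    (hg_int : ∀ δ : ℝ, 0 < δ → IntegrableOn g (Metric.ball (0 : E2) δ)ᶜ)
    (hf_meas : Measurable f) (hf_nonneg : ∀ x, 0 ≤ f x)
    (hf_prob : ∫ x, f x = 1)
    (hf_iso : ∀ x y : E2, ‖x‖ = ‖y‖ → f x = f y)
    (z : E2) (hz : z = EuclideanSpace.single (0 : Fin 2) R)
    (β : E2 → ℝ)
    (hβ : ∀ y, β y = ∫ x, g (x - y - z) / (g z / T + g (x - y - z)) * f x)
    (βI : ℝ) (hβI : βI = ∫ u, g u / (g z / T + g u))
    (hβI_fin : Integrable fun u : E2 => g u / (g z / T + g u))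
    (hβI_pos : 0 < βI)
    (βhat : ℝ) (hβhat : βhat = ⨆ y : E2, β y) (hβhat_pos : 0 < βhat)
    (k : ℝ) (hk : k = ∫ y, β y * f y) (hk_pos : 0 < k)
    (hε : 0 < ε) (hε_small : ε < 1 - Real.exp (-(k / βhat)))
    (P1 : ℝ → ℝ → ℝ) (P2 : ℝ → ℝ)
    (hP1 : ∀ cbar lamp, P1 cbar lamp =
      Real.exp (-(lamp * ∫ y, (1 - Real.exp (-(cbar * β y))))))
    (hP2 : ∀ cbar, P2 cbar = ∫ y, Real.exp (-(cbar * β y)) * f y)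
    (C : ℝ≥0∞)
    (hC : C = ENNReal.ofReal (1 - ε) *
      ⨆ (p : ℝ × ℝ) (_ : 0 < p.1 ∧ 0 < p.2 ∧ 1 - ε ≤ P1 p.2 p.1 * P2 p.2),
        ENNReal.ofReal (p.1 * p.2)) :
    C ≤ ENNReal.ofReal ((1 - ε) / βI * Real.log (1 / (1 - ε))) :=
  stmt_9_general g f T R ε hT hR hg_pos hf_nonneg hf_prob z hz β hβ βI hβI hβI_fin hβI_pos βhat
    hβhat hβhat_pos k hk hε_small P1 P2 hP1 hP2 C hC
end
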